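/- Let h : ℝⁿ → ℝᵐ and g : ℝⁿ → ℝᵖ be continuously differentiable, let λ ∈ ℝᵐ, μ ∈ ℝᵖ with μ ≥ 0, and ρ > 0. Then for every x ∈ ℝⁿ, ‖ (1/2)∇[‖h(x) + λ/ρ‖² + ‖(g(x) + μ/ρ)_+‖²] − (1/2)∇[‖h(x)‖² + ‖g(x)_+‖²] ‖ ≤ (1/ρ)[ ‖∇h(x)‖·‖λ‖ + ‖∇g(x)‖·‖μ‖ ], where the gradients are with respect to x, ∇h(x) and ∇g(x) are the matrices with columns ∇h_i(x) and ∇g_i(x), and ‖·‖ denotes the Euclidean norm of vectors and the operator norm of matrices. -/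

import Mathlib

/-- The transposed Jacobian `∇h(x)`: the `n × m` matrix whose columns are the gradients
`∇hᵢ(x)`, viewed as a continuous linear map `ℝᵐ → ℝⁿ` (operator norm `‖·‖`). -/
noncomputable def jacobianT {n m : ℕ}
    (h : EuclideanSpace ℝ (Fin n) → EuclideanSpace ℝ (Fin m))
    (x : EuclideanSpace ℝ (Fin n)) :
    EuclideanSpace ℝ (Fin m) →L[ℝ] EuclideanSpace ℝ (Fin n) :=
  LinearMap.toContinuousLinearMap
    (Matrix.toEuclideanLin
      (Matrix.of fun (i : Fin n) (j : Fin m) => gradient (fun y => h y j) x i))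

/-- The squared infeasibility measure `‖h(x)‖² + ‖g(x)₊‖²`. -/
noncomputable def infeas {n m p : ℕ}
    (h : EuclideanSpace ℝ (Fin n) → EuclideanSpace ℝ (Fin m))
    (g : EuclideanSpace ℝ (Fin n) → EuclideanSpace ℝ (Fin p))
    (x : EuclideanSpace ℝ (Fin n)) : ℝ :=
  (∑ i, h x i ^ 2) + ∑ j, max (g x j) 0 ^ 2

/-- The shifted squared infeasibility measure `‖h(x) + λ/ρ‖² + ‖(g(x) + μ/ρ)₊‖²`. -/
noncomputable def shiftedInfeas {n m p : ℕ}
    (h : EuclideanSpace ℝ (Fin n) → EuclideanSpace ℝ (Fin m))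
    (g : EuclideanSpace ℝ (Fin n) → EuclideanSpace ℝ (Fin p))
    (lam : EuclideanSpace ℝ (Fin m)) (mu : EuclideanSpace ℝ (Fin p)) (ρ : ℝ)
    (x : EuclideanSpace ℝ (Fin n)) : ℝ :=
  (∑ i, (h x i + lam i / ρ) ^ 2) + ∑ j, max (g x j + mu j / ρ) 0 ^ 2

/-! Both half-gradients are of the form `∇h(x) u + ∇g(x) v`, by the chain rule through
`t ↦ t₊²`, whose derivative `2 t₊` also exists at `0`. Their difference is therefore
`∇h(x) (λ/ρ) + ∇g(x) ((g(x) + μ/ρ)₊ - g(x)₊)`, and since `t ↦ t₊` is 1-Lipschitz the second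
vector has norm at most `‖μ‖/ρ`. -/

lemma hasDerivAt_max_zero_sq (a : ℝ) :
    HasDerivAt (fun t : ℝ => max t 0 ^ 2) (2 * max a 0) a := by
  refine hasDerivAt_of_hasDerivAt_of_ne' (g := fun t => 2 * max t 0) (x := 0)
    (fun y hy => ?_) (by fun_prop) (by fun_prop) a
  rcases hy.lt_or_gt with hy | hy
  · have hzero : (fun t : ℝ => max t 0 ^ 2) =ᶠ[nhds y] fun _ => 0 := by
      filter_upwards [eventually_lt_nhds hy] with t ht
      simp [ht.le]
    simpa [hy.le] using (hasDerivAt_const y (0 : ℝ)).congr_of_eventuallyEq hzero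
  · have hsq : (fun t : ℝ => max t 0 ^ 2) =ᶠ[nhds y] fun t => t ^ 2 := by
      filter_upwards [eventually_gt_nhds hy] with t ht
      simp [ht.le]
    simpa [hy.le, mul_comm] using (hasDerivAt_pow 2 y).congr_of_eventuallyEq hsq

theorem HasGradientAt.add {F : Type*} [NormedAddCommGroup F] [InnerProductSpace ℝ F]
    [CompleteSpace F] {f₁ f₂ : F → ℝ} {g₁ g₂ x : F}
    (h₁ : HasGradientAt f₁ g₁ x) (h₂ : HasGradientAt f₂ g₂ x) :
    HasGradientAt (fun y => f₁ y + f₂ y) (g₁ + g₂) x := by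
  rw [hasGradientAt_iff_hasFDerivAt, map_add]
  exact (hasGradientAt_iff_hasFDerivAt.mp h₁).add (hasGradientAt_iff_hasFDerivAt.mp h₂)

section

variable {n m : ℕ}

lemma jacobianT_apply (h : EuclideanSpace ℝ (Fin n) → EuclideanSpace ℝ (Fin m))
    (x : EuclideanSpace ℝ (Fin n)) (v : EuclideanSpace ℝ (Fin m)) :
    jacobianT h x v = ∑ j, v j • gradient (fun y => h y j) x := by
  ext i
  simp [jacobianT, Matrix.toLpLin_apply, Matrix.mulVec, dotProduct, mul_comm]

lemma hasGradientAt_sum_comp_apply {f : EuclideanSpace ℝ (Fin n) → EuclideanSpace ℝ (Fin m)}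
    {x : EuclideanSpace ℝ (Fin n)} (hf : DifferentiableAt ℝ f x) {φ : Fin m → ℝ → ℝ}
    {d : EuclideanSpace ℝ (Fin m)} (hφ : ∀ i, HasDerivAt (φ i) (d i) (f x i)) :
    HasGradientAt (fun y => ∑ i, φ i (f y i)) (jacobianT f x d) x := by
  rw [jacobianT_apply, hasGradientAt_iff_hasFDerivAt, map_sum]
  refine HasFDerivAt.fun_sum fun i _ => ?_
  have hfi : DifferentiableAt ℝ (fun y => f y i) x :=
    (EuclideanSpace.proj (𝕜 := ℝ) i).differentiableAt.comp x hf
  rw [map_smul]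
  exact (hφ i).comp_hasFDerivAt x (hasGradientAt_iff_hasFDerivAt.mp hfi.hasGradientAt)

end

def euclideanPosPart {ι : Type*} (v : EuclideanSpace ℝ ι) : EuclideanSpace ℝ ι :=
  WithLp.toLp 2 fun j => max (v j) 0

@[simp]
lemma euclideanPosPart_apply {ι : Type*} (v : EuclideanSpace ℝ ι) (j : ι) :
    euclideanPosPart v j = max (v j) 0 := rfl

lemma norm_euclideanPosPart_sub_le {ι : Type*} [Fintype ι] (a b : EuclideanSpace ℝ ι) :
    ‖euclideanPosPart a - euclideanPosPart b‖ ≤ ‖a - b‖ := by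
  rw [EuclideanSpace.norm_eq, EuclideanSpace.norm_eq]
  gcongr with j
  simpa using abs_max_sub_max_le_abs (a j) (b j) 0

section

variable {n m p : ℕ} {h : EuclideanSpace ℝ (Fin n) → EuclideanSpace ℝ (Fin m)}
  {g : EuclideanSpace ℝ (Fin n) → EuclideanSpace ℝ (Fin p)} {x : EuclideanSpace ℝ (Fin n)}

lemma gradient_shiftedInfeas (hh : DifferentiableAt ℝ h x) (hg : DifferentiableAt ℝ g x)
    (lam : EuclideanSpace ℝ (Fin m)) (mu : EuclideanSpace ℝ (Fin p)) (ρ : ℝ) :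
    gradient (shiftedInfeas h g lam mu ρ) x =
      (2 : ℝ) • (jacobianT h x (h x + ρ⁻¹ • lam) +
        jacobianT g x (euclideanPosPart (g x + ρ⁻¹ • mu))) := by
  have hsq : HasGradientAt (fun y => ∑ i, (h y i + lam i / ρ) ^ 2)
      (jacobianT h x ((2 : ℝ) • (h x + ρ⁻¹ • lam))) x := by
    refine hasGradientAt_sum_comp_apply (φ := fun i t => (t + lam i / ρ) ^ 2) hh fun i => ?_
    refine (((hasDerivAt_id' (h x i)).add_const (lam i / ρ)).fun_pow 2).congr_deriv ?_
    simp only [Nat.cast_ofNat, div_eq_inv_mul, Nat.add_one_sub_one, pow_one, mul_one,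
      PiLp.smul_apply, PiLp.add_apply, smul_eq_mul]
  have hpos : HasGradientAt (fun y => ∑ j, max (g y j + mu j / ρ) 0 ^ 2)
      (jacobianT g x ((2 : ℝ) • euclideanPosPart (g x + ρ⁻¹ • mu))) x := by
    refine hasGradientAt_sum_comp_apply (φ := fun j t => max (t + mu j / ρ) 0 ^ 2) hg fun j => ?_
    refine ((hasDerivAt_max_zero_sq _).comp (g x j)
      ((hasDerivAt_id' (g x j)).add_const (mu j / ρ))).congr_deriv ?_
    simp [div_eq_inv_mul]
  rw [smul_add, ← map_smul, ← map_smul]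
  exact (hsq.add hpos).gradient

lemma infeas_eq_shiftedInfeas_zero (ρ : ℝ) : infeas h g = shiftedInfeas h g 0 0 ρ := by
  ext y
  simp [infeas, shiftedInfeas]

lemma gradient_infeas (hh : DifferentiableAt ℝ h x) (hg : DifferentiableAt ℝ g x) :
    gradient (infeas h g) x =
      (2 : ℝ) • (jacobianT h x (h x) + jacobianT g x (euclideanPosPart (g x))) := by
  rw [infeas_eq_shiftedInfeas_zero 1, gradient_shiftedInfeas hh hg]
  simp

end

theorem gradient_shifted_infeasibility_difference_bound_general
    {n m p : ℕ}
    (h : EuclideanSpace ℝ (Fin n) → EuclideanSpace ℝ (Fin m))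
    (g : EuclideanSpace ℝ (Fin n) → EuclideanSpace ℝ (Fin p))
    (hh : ContDiff ℝ 1 h) (hg : ContDiff ℝ 1 g)
    (lam : EuclideanSpace ℝ (Fin m)) (mu : EuclideanSpace ℝ (Fin p))
    (ρ : ℝ) (hρ : 0 < ρ) :
    ∀ x : EuclideanSpace ℝ (Fin n),
      ‖(1 / 2 : ℝ) • gradient (shiftedInfeas h g lam mu ρ) x
          - (1 / 2 : ℝ) • gradient (infeas h g) x‖ ≤
        (1 / ρ) * (‖jacobianT h x‖ * ‖lam‖ + ‖jacobianT g x‖ * ‖mu‖) := by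
  intro x
  have hhx := hh.differentiable one_ne_zero x
  have hgx := hg.differentiable one_ne_zero x
  have hdiff : (1 / 2 : ℝ) • gradient (shiftedInfeas h g lam mu ρ) x
      - (1 / 2 : ℝ) • gradient (infeas h g) x = jacobianT h x (ρ⁻¹ • lam) +
        jacobianT g x (euclideanPosPart (g x + ρ⁻¹ • mu) - euclideanPosPart (g x)) := by
    rw [gradient_shiftedInfeas hhx hgx, gradient_infeas hhx hgx, smul_smul, smul_smul]
    simp only [one_div, inv_mul_cancel₀ (two_ne_zero' ℝ), one_smul, map_add, map_sub]
    abel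
  have hnorm_inv : ‖ρ⁻¹‖ = 1 / ρ := by simp [abs_of_pos hρ]
  rw [hdiff]
  calc _ ≤ ‖jacobianT h x‖ * ‖ρ⁻¹ • lam‖ +
        ‖jacobianT g x‖ * ‖euclideanPosPart (g x + ρ⁻¹ • mu) - euclideanPosPart (g x)‖ :=
        (norm_add_le _ _).trans <|
          add_le_add ((jacobianT h x).le_opNorm _) ((jacobianT g x).le_opNorm _)
    _ ≤ ‖jacobianT h x‖ * ‖ρ⁻¹ • lam‖ + ‖jacobianT g x‖ * ‖ρ⁻¹ • mu‖ := by
        gcongr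
        simpa using norm_euclideanPosPart_sub_le (g x + ρ⁻¹ • mu) (g x)
    _ = _ := by rw [norm_smul, norm_smul, hnorm_inv]; ring

/-- The half-gradients of the shifted and unshifted squared infeasibility measures differ
by at most `(1/ρ) (‖∇h(x)‖‖λ‖ + ‖∇g(x)‖‖μ‖)`. -/
theorem gradient_shifted_infeasibility_difference_bound
    {n m p : ℕ}
    (h : EuclideanSpace ℝ (Fin n) → EuclideanSpace ℝ (Fin m))
    (g : EuclideanSpace ℝ (Fin n) → EuclideanSpace ℝ (Fin p))
    (hh : ContDiff ℝ 1 h) (hg : ContDiff ℝ 1 g)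
    (lam : EuclideanSpace ℝ (Fin m)) (mu : EuclideanSpace ℝ (Fin p))
    (hmu : ∀ j, 0 ≤ mu j) (ρ : ℝ) (hρ : 0 < ρ) :
    ∀ x : EuclideanSpace ℝ (Fin n),
      ‖(1 / 2 : ℝ) • gradient (shiftedInfeas h g lam mu ρ) x
          - (1 / 2 : ℝ) • gradient (infeas h g) x‖ ≤
        (1 / ρ) * (‖jacobianT h x‖ * ‖lam‖ + ‖jacobianT g x‖ * ‖mu‖) :=
  gradient_shifted_infeasibility_difference_bound_general h g hh hg lam mu ρ hρ
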